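/- Let f : M → M be a continuous map on a compact metric space, φ : M → ℝ continuous, and ν a Gibbs measure for φ with constant P: there is ε₀ > 0 such that for 0 < ε < ε₀ there is K(ε) > 0 with K(ε)^{-1} ≤ ν(B(x,n,ε))·e^{nP − S_nφ(x)} ≤ K(ε) for all x and n. Suppose E ⊆ M is a set of points, each assigned a length m(x) ≥ N, such that the dynamical balls {B(x, m(x), ε/2) : x ∈ E} are pairwise disjoint and each B(x, m(x), ε) is contained in the set X_{I_δ, m(x)} = {y : (1/m(x))S_{m(x)}ψ(y) ∈ I_δ}. If ν(X_{I_δ,n}) ≤ e^{−(L−ζ)n} for all n ≥ N, then ∑_{x∈E} e^{−α·m(x) + S_{m(x)}φ(x)} ≤ K(ε)K(ε/2)·∑_{ℓ≥N} e^{(P−α−L+ζ)ℓ}, which is finite whenever α > P − L + ζ. -/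

import Mathlib

/-!
Group the points of `E` by their length `ℓ = m x`. For a fixed `ℓ`, the Gibbs lower bound at
scale `ε/2` gives `e^{-ℓP + S_ℓφ(x)} ≤ K(ε/2) ν(B(x,ℓ,ε/2))`; these balls are pairwise disjoint
and lie in `X_{I_δ,ℓ}`, so the weights of length `ℓ` add up to at most
`K(ε/2) e^{(P-α)ℓ} ν(X_{I_δ,ℓ}) ≤ K(ε/2) e^{(P-α-L+ζ)ℓ}`. Summing over `ℓ ≥ N` gives the bound,
since `K(ε) ≥ 1` by the Gibbs bounds at `n = 0`, and the geometric series converges when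
`α > P - L + ζ`.
-/

open MeasureTheory Function

def bowenBall {M : Type*} [MetricSpace M] (f : M → M) (x : M) (n : ℕ) (r : ℝ) : Set M :=
  {y | ∀ j < n, dist (f^[j] x) (f^[j] y) < r}

section BowenBall

variable {M : Type*} [MetricSpace M] {f : M → M}

theorem isOpen_bowenBall (hf : Continuous f) (x : M) (n : ℕ) (r : ℝ) :
    IsOpen (bowenBall f x n r) := by
  simp only [bowenBall, Set.ofPred_forall]
  exact (Set.finite_lt_nat n).isOpen_biInter fun j _ =>
    isOpen_lt (continuous_const.dist (hf.iterate j)) continuous_const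

theorem bowenBall_mono {x : M} {n : ℕ} {r s : ℝ} (h : r ≤ s) :
    bowenBall f x n r ⊆ bowenBall f x n s :=
  fun _ hy j hj => (hy j hj).trans_le h

end BowenBall

theorem MeasureTheory.tsum_le_mul_measure_of_disjoint {α ι : Type*} [MeasurableSpace α]
    (μ : Measure α) {B : ι → Set α} {X : Set α} {g : ι → ENNReal} {C : ENNReal}
    (hB : ∀ i, MeasurableSet (B i)) (hdisj : Pairwise (Disjoint on B)) (hBX : ∀ i, B i ⊆ X)
    (hg : ∀ i, g i ≤ C * μ (B i)) :
    ∑' i, g i ≤ C * μ X :=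
  calc ∑' i, g i ≤ ∑' i, C * μ (B i) := ENNReal.tsum_le_tsum hg
    _ = C * ∑' i, μ (B i) := ENNReal.tsum_mul_left
    _ ≤ C * μ (⋃ i, B i) := by gcongr; exact tsum_meas_le_meas_iUnion_of_disjoint μ hB hdisj
    _ ≤ C * μ X := by gcongr; exact Set.iUnion_subset hBX

theorem tsum_ofReal_exp_mul_lt_top {c : ℝ} (hc : c < 0) (p : ℕ → Prop) :
    ∑' n : {n // p n}, ENNReal.ofReal (Real.exp (c * n)) < ⊤ := by
  have hgeom : ∑' n : ℕ, ENNReal.ofReal (Real.exp (c * n)) < ⊤ := by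
    simp_rw [mul_comm c, Real.exp_nat_mul, ENNReal.ofReal_pow (Real.exp_pos c).le]
    exact tsum_geometric_lt_top.2 (ENNReal.ofReal_lt_one.2 (Real.exp_lt_one_iff.2 hc))
  exact (ENNReal.tsum_comp_le_tsum_of_injective Subtype.val_injective _).trans_lt hgeom

section Gibbs

variable {M : Type*} [MetricSpace M] [MeasurableSpace M] [BorelSpace M] {f : M → M}
  (ν : Measure M) (φ : M → ℝ) {P K r : ℝ}

theorem tsum_ofReal_exp_birkhoffSum_le {ι : Type*} (hf : Continuous f) (hK : 0 < K)
    (hGibbs : ∀ x n, K⁻¹ * Real.exp (-n * P + birkhoffSum f φ n x) ≤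
      (ν (bowenBall f x n r)).toReal)
    (p : ι → M) (n : ℕ) {X : Set M}
    (hdisj : Pairwise (Disjoint on fun i => bowenBall f (p i) n r))
    (hsub : ∀ i, bowenBall f (p i) n r ⊆ X) :
    ∑' i, ENNReal.ofReal (Real.exp (-n * P + birkhoffSum f φ n (p i))) ≤
      ENNReal.ofReal K * ν X := by
  refine tsum_le_mul_measure_of_disjoint ν (fun i => (isOpen_bowenBall hf _ _ _).measurableSet)
    hdisj hsub fun i => ?_
  calc ENNReal.ofReal (Real.exp (-n * P + birkhoffSum f φ n (p i)))
      ≤ ENNReal.ofReal (K * (ν (bowenBall f (p i) n r)).toReal) :=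
        ENNReal.ofReal_le_ofReal ((inv_mul_le_iff₀ hK).1 (hGibbs (p i) n))
    _ ≤ ENNReal.ofReal K * ν (bowenBall f (p i) n r) := by
        rw [ENNReal.ofReal_mul hK.le]
        gcongr
        exact ENNReal.ofReal_toReal_le

theorem tsum_ofReal_exp_birkhoffSum_le_tsum {ι : Type*} (hf : Continuous f) (hK : 0 < K)
    (hGibbs : ∀ x n, K⁻¹ * Real.exp (-n * P + birkhoffSum f φ n x) ≤
      (ν (bowenBall f x n r)).toReal)
    (p : ι → M) (m : ι → ℕ) {N : ℕ} (hmN : ∀ i, N ≤ m i) (X : ℕ → Set M) (α γ : ℝ)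
    (hdisj : Pairwise fun i j => Disjoint (bowenBall f (p i) (m i) r) (bowenBall f (p j) (m j) r))
    (hsub : ∀ i, bowenBall f (p i) (m i) r ⊆ X (m i))
    (hX : ∀ n, N ≤ n → ν (X n) ≤ ENNReal.ofReal (Real.exp (-γ * n))) :
    ∑' i, ENNReal.ofReal (Real.exp (-α * m i + birkhoffSum f φ (m i) (p i))) ≤
      ENNReal.ofReal K * ∑' n : {n // N ≤ n}, ENNReal.ofReal (Real.exp ((P - α - γ) * n)) := by
  let π : ι → {n // N ≤ n} := fun i => ⟨m i, hmN i⟩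
  rw [← ENNReal.tsum_fiberwise _ π, ← ENNReal.tsum_mul_left]
  refine ENNReal.tsum_le_tsum fun n => ?_
  have hm : ∀ i : π ⁻¹' {n}, m i = n := fun i => congrArg Subtype.val i.2
  calc ∑' i : π ⁻¹' {n}, ENNReal.ofReal (Real.exp (-α * m i + birkhoffSum f φ (m i) (p i)))
      = ∑' i : π ⁻¹' {n}, ENNReal.ofReal (Real.exp ((P - α) * n)) *
          ENNReal.ofReal (Real.exp (-n * P + birkhoffSum f φ n (p i))) := by
        refine tsum_congr fun i => ?_
        rw [hm i, ← ENNReal.ofReal_mul (Real.exp_pos _).le, ← Real.exp_add]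
        ring_nf
    _ = ENNReal.ofReal (Real.exp ((P - α) * n)) *
          ∑' i : π ⁻¹' {n}, ENNReal.ofReal (Real.exp (-n * P + birkhoffSum f φ n (p i))) :=
        ENNReal.tsum_mul_left
    _ ≤ ENNReal.ofReal (Real.exp ((P - α) * n)) * (ENNReal.ofReal K * ν (X n)) := by
        gcongr
        refine tsum_ofReal_exp_birkhoffSum_le ν φ hf hK hGibbs (fun i : π ⁻¹' {n} => p i) n
          (fun i j hij => ?_) fun i => hm i ▸ hsub i
        simpa only [hm] using hdisj (Subtype.coe_injective.ne hij)
    _ ≤ ENNReal.ofReal (Real.exp ((P - α) * n)) *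
          (ENNReal.ofReal K * ENNReal.ofReal (Real.exp (-γ * n))) := by
        gcongr
        exact hX n n.2
    _ = ENNReal.ofReal K * ENNReal.ofReal (Real.exp ((P - α - γ) * n)) := by
        rw [mul_left_comm, ← ENNReal.ofReal_mul (Real.exp_pos _).le, ← Real.exp_add]
        ring_nf

end Gibbs

theorem stmt6_general {M : Type*} [MetricSpace M] [MeasurableSpace M] [BorelSpace M]
    (f : M → M) (hf : Continuous f)
    (φ ψ : M → ℝ)
    (ν : Measure M) [IsFiniteMeasure ν]
    (P ε₀ : ℝ) (K : ℝ → ℝ)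
    (hK : ∀ ε : ℝ, 0 < ε → ε < ε₀ → 0 < K ε)
    (hGibbs : ∀ ε : ℝ, 0 < ε → ε < ε₀ → ∀ x : M, ∀ n : ℕ,
      (K ε)⁻¹ * Real.exp (-(n : ℝ) * P + ∑ j ∈ Finset.range n, φ (f^[j] x)) ≤
          (ν {y | ∀ j < n, dist (f^[j] x) (f^[j] y) < ε}).toReal ∧
      (ν {y | ∀ j < n, dist (f^[j] x) (f^[j] y) < ε}).toReal ≤
          K ε * Real.exp (-(n : ℝ) * P + ∑ j ∈ Finset.range n, φ (f^[j] x)))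
    (Iδ : Set ℝ) (E : Set M) (m : M → ℕ) (N : ℕ) (L ζ α ε : ℝ)
    (hε : 0 < ε) (hεε₀ : ε < ε₀)
    (hmN : ∀ x ∈ E, N ≤ m x)
    (hdisj : ∀ x ∈ E, ∀ y ∈ E, x ≠ y →
      Disjoint {z : M | ∀ j < m x, dist (f^[j] x) (f^[j] z) < ε / 2}
               {z : M | ∀ j < m y, dist (f^[j] y) (f^[j] z) < ε / 2})
    (hcontain : ∀ x ∈ E,
      {z : M | ∀ j < m x, dist (f^[j] x) (f^[j] z) < ε} ⊆
      {y : M | (1 / (m x : ℝ)) * ∑ j ∈ Finset.range (m x), ψ (f^[j] y) ∈ Iδ})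
    (hLD : ∀ n : ℕ, N ≤ n →
      (ν {y : M | (1 / (n : ℝ)) * ∑ j ∈ Finset.range n, ψ (f^[j] y) ∈ Iδ}).toReal ≤
        Real.exp (-(L - ζ) * n)) :
    (∑' x : E,
        ENNReal.ofReal (Real.exp (-α * (m (x : M)) +
          ∑ j ∈ Finset.range (m (x : M)), φ (f^[j] (x : M)))) ≤
      ENNReal.ofReal (K ε * K (ε / 2)) *
        ∑' ℓ : {l : ℕ // N ≤ l}, ENNReal.ofReal (Real.exp ((P - α - L + ζ) * ((ℓ : ℕ) : ℝ)))) ∧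
    (P - L + ζ < α →
      ∑' x : E,
        ENNReal.ofReal (Real.exp (-α * (m (x : M)) +
          ∑ j ∈ Finset.range (m (x : M)), φ (f^[j] (x : M)))) < ⊤) := by
  rcases isEmpty_or_nonempty M with hM | ⟨⟨x₀⟩⟩
  · simp
  have hε₂ : 0 < ε / 2 := half_pos hε
  have hε₂ε₀ : ε / 2 < ε₀ := by linarith
  have hK₁ : 1 ≤ K ε := by
    obtain ⟨hlow, hupp⟩ := hGibbs ε hε hεε₀ x₀ 0
    simp only [CharP.cast_eq_zero, Finset.range_zero, Finset.sum_empty, neg_zero, zero_mul,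
      add_zero, Real.exp_zero, mul_one] at hlow hupp
    have hKε := hK ε hε hεε₀
    have := (inv_le_iff_one_le_mul₀ hKε).1 (hlow.trans hupp)
    nlinarith
  have hbound := tsum_ofReal_exp_birkhoffSum_le_tsum ν φ hf (hK _ hε₂ hε₂ε₀)
    (fun x n => (hGibbs _ hε₂ hε₂ε₀ x n).1) (fun x : E => x) (fun x => m x) (fun x => hmN x x.2)
    (fun n => {y | 1 / (n : ℝ) * ∑ j ∈ Finset.range n, ψ (f^[j] y) ∈ Iδ}) α (L - ζ)
    (fun x y hxy => hdisj x x.2 y y.2 (Subtype.coe_injective.ne hxy))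
    (fun x => (bowenBall_mono (by linarith)).trans (hcontain x x.2))
    (fun n hn => (ENNReal.le_ofReal_iff_toReal_le (measure_ne_top _ _) (Real.exp_pos _).le).2
      (hLD n hn))
  rw [show P - α - (L - ζ) = P - α - L + ζ by ring] at hbound
  refine ⟨hbound.trans ?_, fun hα => hbound.trans_lt ?_⟩
  · gcongr
    exact le_mul_of_one_le_left (hK _ hε₂ hε₂ε₀).le hK₁
  · exact ENNReal.mul_lt_top ENNReal.ofReal_lt_top (tsum_ofReal_exp_mul_lt_top (by linarith) _)

/-- the key counting estimate. For a Gibbs measure `ν` and a family `E` of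
centers of pairwise disjoint dynamical balls contained in the sets `X_{I_δ,m(x)}`, whose
`ν`-measures decay exponentially with rate `L−ζ`, the weighted sum of
`e^{−α m(x) + S_{m(x)}φ(x)}` is bounded by `K(ε)K(ε/2) ∑_{ℓ≥N} e^{(P−α−L+ζ)ℓ}`,
finite whenever `α > P − L + ζ`. -/
theorem stmt6 {M : Type*} [MetricSpace M] [CompactSpace M] [MeasurableSpace M] [BorelSpace M]
    (f : M → M) (hf : Continuous f)
    (φ ψ : M → ℝ) (hφ : Continuous φ) (hψ : Continuous ψ)
    (ν : Measure M) [IsFiniteMeasure ν]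
    (P ε₀ : ℝ) (hε₀ : 0 < ε₀) (K : ℝ → ℝ)
    (hK : ∀ ε : ℝ, 0 < ε → ε < ε₀ → 0 < K ε)
    (hGibbs : ∀ ε : ℝ, 0 < ε → ε < ε₀ → ∀ x : M, ∀ n : ℕ,
      (K ε)⁻¹ * Real.exp (-(n : ℝ) * P + ∑ j ∈ Finset.range n, φ (f^[j] x)) ≤
          (ν {y | ∀ j < n, dist (f^[j] x) (f^[j] y) < ε}).toReal ∧
      (ν {y | ∀ j < n, dist (f^[j] x) (f^[j] y) < ε}).toReal ≤
          K ε * Real.exp (-(n : ℝ) * P + ∑ j ∈ Finset.range n, φ (f^[j] x)))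
    (Iδ : Set ℝ) (E : Set M) (m : M → ℕ) (N : ℕ) (L ζ α ε : ℝ)
    (hζ : 0 < ζ) (hε : 0 < ε) (hεε₀ : ε < ε₀)
    (hmN : ∀ x ∈ E, N ≤ m x)
    (hdisj : ∀ x ∈ E, ∀ y ∈ E, x ≠ y →
      Disjoint {z : M | ∀ j < m x, dist (f^[j] x) (f^[j] z) < ε / 2}
               {z : M | ∀ j < m y, dist (f^[j] y) (f^[j] z) < ε / 2})
    (hcontain : ∀ x ∈ E,
      {z : M | ∀ j < m x, dist (f^[j] x) (f^[j] z) < ε} ⊆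
      {y : M | (1 / (m x : ℝ)) * ∑ j ∈ Finset.range (m x), ψ (f^[j] y) ∈ Iδ})
    (hLD : ∀ n : ℕ, N ≤ n →
      (ν {y : M | (1 / (n : ℝ)) * ∑ j ∈ Finset.range n, ψ (f^[j] y) ∈ Iδ}).toReal ≤
        Real.exp (-(L - ζ) * n)) :
    (∑' x : E,
        ENNReal.ofReal (Real.exp (-α * (m (x : M)) +
          ∑ j ∈ Finset.range (m (x : M)), φ (f^[j] (x : M)))) ≤
      ENNReal.ofReal (K ε * K (ε / 2)) *
        ∑' ℓ : {l : ℕ // N ≤ l}, ENNReal.ofReal (Real.exp ((P - α - L + ζ) * ((ℓ : ℕ) : ℝ)))) ∧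
    (P - L + ζ < α →
      ∑' x : E,
        ENNReal.ofReal (Real.exp (-α * (m (x : M)) +
          ∑ j ∈ Finset.range (m (x : M)), φ (f^[j] (x : M)))) < ⊤) :=
  stmt6_general f hf φ ψ ν P ε₀ K hK hGibbs Iδ E m N L ζ α ε hε hεε₀ hmN hdisj hcontain hLD
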